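/- The product ⊴ on rooted trees is dual to the deconcatenation-type coproduct Δ: for all rooted trees T₁, T₂, T, ⟨T₁ ⊴ T₂, T⟩ = ⟨T₁ ⊗ T₂, Δ(T)⟩. -/
import Mathlib

inductive RTree (Ω : Type) : Type where
  | node : Ω → List (RTree Ω) → RTree Ω
abbrev RForest (Ω : Type) := List (RTree Ω)
abbrev FV (Ω : Type) := RForest Ω →₀ ℚ

mutual
/-- The list of addresses of the leaves of a rooted tree. -/
def leafPaths {Ω : Type} : RTree Ω → List (List ℕ)
  | RTree.node _ [] => [[]]
  | RTree.node _ (t :: ts) => leafPathsF 0 (t :: ts)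
/-- Leaf addresses of the trees of a forest, children indexed from `i`. -/
def leafPathsF {Ω : Type} : ℕ → RForest Ω → List (List ℕ)
  | _, [] => []
  | i, t :: ts => (leafPaths t).map (fun p => i :: p) ++ leafPathsF (i + 1) ts
end

/-- Total number of leaves of a forest. -/
def forestLeaves {Ω : Type} (F : RForest Ω) : ℕ :=
  (F.map (fun t => (leafPaths t).length)).sum

/-- Graft a forest at the end of a linear tree. -/
def graftLin {Ω : Type} : RForest Ω → RForest Ω → RForest Ω
  | [], G => G
  | (RTree.node a ts) :: _, G => [RTree.node a (graftLin ts G)]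

/-- `T ⊴ T'` on basis trees: `0` if `T` has more than one leaf, and otherwise
the grafting of `T'` on the unique leaf of the linear tree `T` (with
`∅ ⊴ T' = T'`). -/
noncomputable def tleq {Ω : Type} (F G : RForest Ω) : FV Ω :=
  if forestLeaves F ≤ 1 then Finsupp.single (graftLin F G) 1 else 0

/-- Linear extension of the grafting operator `B₊^a`. -/
noncomputable def graftF {Ω : Type} (a : Ω) : FV Ω →ₗ[ℚ] FV Ω :=
  Finsupp.lmapDomain ℚ ℚ (fun F => [RTree.node a F])

def IsTree {Ω : Type} (F : RForest Ω) : Prop := F.length ≤ 1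


section Aux
open Classical

variable {Ω : Type}

lemma leafPathsF_length (f : RForest Ω) : ∀ i, (leafPathsF i f).length = forestLeaves f := by
  induction f with
  | nil => intro i; simp [leafPathsF, forestLeaves]
  | cons t ts ih => intro i; simp [leafPathsF, forestLeaves, ih]

lemma one_le_leafPaths : ∀ t : RTree Ω, 1 ≤ (leafPaths t).length
  | RTree.node _ [] => by simp [leafPaths]
  | RTree.node _ (t :: _) => by
      have h := one_le_leafPaths t
      simp only [leafPaths, leafPathsF, List.length_append, List.length_map]
      omega

lemma one_le_forestLeaves_cons (t : RTree Ω) (r : RForest Ω) :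
    1 ≤ forestLeaves (t :: r) := by
  have := one_le_leafPaths t
  simp only [forestLeaves, List.map_cons, List.sum_cons]
  omega

lemma two_le_forestLeaves (t₁ t₂ : RTree Ω) (r : RForest Ω) :
    2 ≤ forestLeaves (t₁ :: t₂ :: r) := by
  have h1 := one_le_leafPaths t₁
  have h2 := one_le_leafPaths t₂
  simp only [forestLeaves, List.map_cons, List.sum_cons]
  omega

lemma forestLeaves_single_node (a : Ω) (s : RForest Ω) :
    forestLeaves [RTree.node a s] = max 1 (forestLeaves s) := by
  cases s with
  | nil => simp [forestLeaves, leafPaths]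
  | cons t ts =>
      have h1 : forestLeaves [RTree.node a (t :: ts)]
          = (leafPathsF 0 (t :: ts)).length := by
        simp [forestLeaves, leafPaths]
      rw [h1, leafPathsF_length]
      have := one_le_forestLeaves_cons t ts
      omega

lemma isTree_graftLin (F G : RForest Ω) (h : IsTree G) : IsTree (graftLin F G) := by
  cases F with
  | nil => simpa [graftLin]
  | cons t r => cases t; simp [graftLin, IsTree]

lemma node_inj (a : Ω) : Function.Injective (fun F : RForest Ω => [RTree.node a F]) := by
  intro x y h; simpa using h

lemma graftF_apply_node (a : Ω) (s : RForest Ω) (x : FV Ω) :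
    (graftF a x) [RTree.node a s] = x s := by
  rw [graftF, Finsupp.lmapDomain_apply]
  exact Finsupp.mapDomain_apply (node_inj a) x s

lemma graftF_apply_notin (a : Ω) (F : RForest Ω) (h : ∀ s, F ≠ [RTree.node a s])
    (x : FV Ω) : (graftF a x) F = 0 := by
  rw [graftF, Finsupp.lmapDomain_apply]
  refine Finsupp.mapDomain_notin_range x F ?_
  rintro ⟨s, rfl⟩
  exact h s rfl

lemma comp_graftF_node (a : Ω) (s : RForest Ω) :
    (Finsupp.lapply [RTree.node a s] : FV Ω →ₗ[ℚ] ℚ) ∘ₗ graftF a = Finsupp.lapply s := by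
  refine LinearMap.ext fun x => ?_
  simp only [LinearMap.comp_apply, Finsupp.lapply_apply]
  exact graftF_apply_node a s x

lemma comp_graftF_zero (a : Ω) (F : RForest Ω) (h : ∀ s, F ≠ [RTree.node a s]) :
    (Finsupp.lapply F : FV Ω →ₗ[ℚ] ℚ) ∘ₗ graftF a = 0 := by
  refine LinearMap.ext fun x => ?_
  simp only [LinearMap.comp_apply, Finsupp.lapply_apply, LinearMap.zero_apply]
  exact graftF_apply_notin a F h x

lemma map_zero_left' (g : FV Ω →ₗ[ℚ] ℚ) (x : TensorProduct ℚ (FV Ω) (FV Ω)) :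
    TensorProduct.map (0 : FV Ω →ₗ[ℚ] ℚ) g x = 0 := by
  have : TensorProduct.map (0 : FV Ω →ₗ[ℚ] ℚ) g = 0 := by
    apply TensorProduct.ext'
    intro m n
    simp
  rw [this]; rfl

lemma key {Ω : Type}
    (Δ : RForest Ω → TensorProduct ℚ (FV Ω) (FV Ω))
    (hΔ0 : Δ [] = Finsupp.single [] 1 ⊗ₜ[ℚ] Finsupp.single [] 1)
    (hΔtree : ∀ (a : Ω) (t : RForest Ω), IsTree t →
      Δ [RTree.node a t] =
        TensorProduct.map (graftF a) LinearMap.id (Δ t)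
          + Finsupp.single [] 1 ⊗ₜ[ℚ] Finsupp.single [RTree.node a t] 1)
    (hΔforest : ∀ (a : Ω) (f : RForest Ω), 2 ≤ f.length →
      Δ [RTree.node a f] = Finsupp.single [] 1 ⊗ₜ[ℚ] Finsupp.single [RTree.node a f] 1) :
    ∀ (n : ℕ) (T : RForest Ω), sizeOf T ≤ n → IsTree T → ∀ (F T₂ : RForest Ω), IsTree T₂ →
      (tleq F T₂) T
        = (TensorProduct.lid ℚ ℚ)
            (TensorProduct.map (Finsupp.lapply F) (Finsupp.lapply T₂) (Δ T)) := by
  intro n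
  induction n using Nat.strong_induction_on with
  | _ n ih =>
  intro T hsz hT F T₂ hT₂
  match T, hT with
  | [], _ =>
      rw [hΔ0]
      simp only [TensorProduct.map_tmul, TensorProduct.lid_tmul, Finsupp.lapply_apply,
        smul_eq_mul]
      cases F with
      | nil =>
          simp only [tleq, forestLeaves, graftLin]
          rw [if_pos (by simp)]
          simp [Finsupp.single_apply, eq_comm]
      | cons t r =>
          have h0 : (Finsupp.single ([] : RForest Ω) (1:ℚ)) (t :: r) = 0 := by
            simp [Finsupp.single_apply]
          rw [h0, zero_mul]
          simp only [tleq]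
          split_ifs with hle
          · cases t
            simp [graftLin, Finsupp.single_apply]
          · rfl
  | [RTree.node a s], _ =>
      by_cases hs : s.length ≤ 1
      · -- tree case
        rw [hΔtree a s hs]
        simp only [_root_.map_add]
        have hcomp : ∀ (lF : FV Ω →ₗ[ℚ] ℚ),
            TensorProduct.map lF (Finsupp.lapply T₂)
              (TensorProduct.map (graftF a) LinearMap.id (Δ s))
            = TensorProduct.map (lF ∘ₗ graftF a) (Finsupp.lapply T₂) (Δ s) := by
          intro lF
          rw [← LinearMap.comp_apply, ← TensorProduct.map_comp, LinearMap.comp_id]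
        rw [hcomp]
        cases F with
        | nil =>
            rw [comp_graftF_zero a [] (by intro s'; simp), map_zero_left', LinearEquiv.map_zero, zero_add]
            simp only [TensorProduct.map_tmul, TensorProduct.lid_tmul,
              Finsupp.lapply_apply, smul_eq_mul]
            rw [Finsupp.single_eq_same, one_mul]
            simp only [tleq, forestLeaves, List.map_nil, List.sum_nil, graftLin]
            rw [if_pos (by omega)]
            simp [Finsupp.single_apply, eq_comm]
        | cons t r =>
            have hsingF : (Finsupp.single ([] : RForest Ω) (1:ℚ)) (t :: r) = 0 := by
              simp [Finsupp.single_apply]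
            cases r with
            | cons t' r' =>
                rw [comp_graftF_zero a (t :: t' :: r') (by intro s'; simp), map_zero_left', LinearEquiv.map_zero,
                  zero_add]
                simp only [TensorProduct.map_tmul, TensorProduct.lid_tmul,
                  Finsupp.lapply_apply, smul_eq_mul, hsingF, zero_mul]
                have h2 := two_le_forestLeaves t t' r'
                simp only [tleq]
                rw [if_neg (by omega)]
                rfl
            | nil =>
                obtain ⟨b, rb⟩ := t
                by_cases hb : b = a
                · subst hb
                  rw [comp_graftF_node]
                  have hszs : sizeOf s < n := by
                    have : sizeOf s < sizeOf [RTree.node b s] := by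
                      simp; omega
                    omega
                  rw [← ih (sizeOf s) hszs s le_rfl hs rb T₂ hT₂]
                  simp only [TensorProduct.map_tmul, TensorProduct.lid_tmul,
                    Finsupp.lapply_apply, smul_eq_mul, hsingF, zero_mul, add_zero]
                  simp only [tleq, forestLeaves_single_node]
                  by_cases hrb : forestLeaves rb ≤ 1
                  · rw [if_pos hrb, if_pos (by omega)]
                    simp [graftLin, Finsupp.single_apply, List.cons.injEq, RTree.node.injEq]
                  · rw [if_neg hrb, if_neg (by omega)]
                    simp
                · rw [comp_graftF_zero a [RTree.node b rb]
                      (by intro s' h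
                          injection h with h1 _
                          injection h1 with h2 _
                          exact hb h2), map_zero_left', LinearEquiv.map_zero, zero_add]
                  simp only [TensorProduct.map_tmul, TensorProduct.lid_tmul,
                    Finsupp.lapply_apply, smul_eq_mul, hsingF, zero_mul]
                  simp only [tleq]
                  split_ifs with hle
                  · simp [graftLin, Finsupp.single_apply, hb]
                  · rfl
      · -- non-connected case
        rw [hΔforest a s (by omega)]
        simp only [TensorProduct.map_tmul, TensorProduct.lid_tmul, Finsupp.lapply_apply,
          smul_eq_mul]
        cases F with
        | nil =>
            rw [Finsupp.single_eq_same, one_mul]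
            simp only [tleq, forestLeaves, List.map_nil, List.sum_nil, graftLin]
            rw [if_pos (by omega)]
            simp [Finsupp.single_apply, eq_comm]
        | cons t r =>
            have hsingF : (Finsupp.single ([] : RForest Ω) (1:ℚ)) (t :: r) = 0 := by
              simp [Finsupp.single_apply]
            rw [hsingF, zero_mul]
            simp only [tleq]
            split_ifs with hle
            · obtain ⟨b, rb⟩ := t
              have htree : (graftLin rb T₂).length ≤ 1 := isTree_graftLin rb T₂ hT₂
              have hne : s ≠ graftLin rb T₂ := by
                intro h; rw [h] at hs; omega
              simp [graftLin, Finsupp.single_apply]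
              intro h1 h2
              exact absurd h2.symm hne
            · rfl

end Aux

/-- the product `⊴` is dual to the deconcatenation coproduct `Δ`:
`⟨T₁ ⊴ T₂, T⟩ = ⟨T₁ ⊗ T₂, Δ(T)⟩` for all rooted trees `T₁, T₂, T`.  The right
hand side is the pairing in which trees form an orthonormal basis, computed by
applying the coefficient functionals at `T₁` and `T₂`. -/
theorem tleq_dual_to_coprod {Ω : Type}
    (Δ : RForest Ω → TensorProduct ℚ (FV Ω) (FV Ω))
    (hΔ0 : Δ [] = Finsupp.single [] 1 ⊗ₜ[ℚ] Finsupp.single [] 1)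
    (hΔtree : ∀ (a : Ω) (t : RForest Ω), IsTree t →
      Δ [RTree.node a t] =
        TensorProduct.map (graftF a) LinearMap.id (Δ t)
          + Finsupp.single [] 1 ⊗ₜ[ℚ] Finsupp.single [RTree.node a t] 1)
    (hΔforest : ∀ (a : Ω) (f : RForest Ω), 2 ≤ f.length →
      Δ [RTree.node a f] = Finsupp.single [] 1 ⊗ₜ[ℚ] Finsupp.single [RTree.node a f] 1) :
    ∀ T₁ T₂ T : RForest Ω, IsTree T₁ → IsTree T₂ → IsTree T →
      (tleq T₁ T₂) T
        = (TensorProduct.lid ℚ ℚ)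
            (TensorProduct.map (Finsupp.lapply T₁) (Finsupp.lapply T₂) (Δ T)) := by
  intro T₁ T₂ T _ h2 h3
  exact key Δ hΔ0 hΔtree hΔforest (sizeOf T) T le_rfl h3 T₁ T₂ h2
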